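/- arXiv:2104.05841 — 6 statements merged into one kernel-verified Lean document; each statement's English description precedes it below -/
import Mathlib

section
/- For the bar map associated to an N-periodic parity sequence and for any i ∈ ℤ, the preimage B_s(i) = { j ∈ ℤ : \overline{j} = i } is a nonempty finite set, provided m ≠ n. -/
/-!
Writing `N = m + n`, periodicity of `s` makes the increment `bar (j + N) - bar j` independent of
`j`, and over `1, …, N` it is `m - n`, so `bar (j + N) = bar j + (m - n)`. Since `m ≠ n`, the bar
map is therefore unbounded in both directions, and as its steps are `±1` it takes every value.
In a fiber, `j` is determined by `j % N`, because the `N`-translates of a point have pairwise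
different bar values; hence fibers are finite.
-/

open Finset

section UnitSteps

variable {f : ℤ → ℤ}

theorem exists_eq_of_abs_succ_sub_le_one (hf : ∀ j, |f (j + 1) - f j| ≤ 1) {a b v : ℤ}
    (hab : a ≤ b) (ha : f a ≤ v) (hb : v ≤ f b) : ∃ t, f t = v := by
  induction b, hab using Int.leInduction with
  | base => exact ⟨a, le_antisymm ha hb⟩
  | succ b _ ih =>
    rcases le_or_gt v (f b) with hvb | hbv
    · exact ih hvb
    · have := abs_le.mp (hf b)
      exact ⟨b + 1, by omega⟩

theorem surjective_of_abs_succ_sub_le_one (hf : ∀ j, |f (j + 1) - f j| ≤ 1)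
    (hbot : ∀ v, ∃ a, f a ≤ v) (htop : ∀ v, ∃ b, v ≤ f b) : Function.Surjective f := by
  intro v
  obtain ⟨a, ha⟩ := hbot v
  obtain ⟨b, hb⟩ := htop v
  rcases le_total a b with hab | hba
  · exact exists_eq_of_abs_succ_sub_le_one hf hab ha hb
  · have hf' (j : ℤ) : |-f (j + 1) - -f j| ≤ 1 := by
      rw [neg_sub_neg, abs_sub_comm]; exact hf j
    obtain ⟨t, ht⟩ := exists_eq_of_abs_succ_sub_le_one (f := (-f ·)) hf' hba (neg_le_neg hb)
      (neg_le_neg ha)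
    exact ⟨t, neg_inj.mp ht⟩

end UnitSteps

section QuasiPeriodic

variable {f : ℤ → ℤ} {N d : ℤ} (hfd : ∀ j, f (j + N) = f j + d)
include hfd

theorem add_mul_period_eq (q j : ℤ) : f (j + q * N) = f j + q * d := by
  induction q using Int.induction_on with
  | zero => simp
  | succ q ih => rw [add_mul, one_mul, ← add_assoc, hfd, ih]; ring
  | pred q ih =>
    have := hfd (j + (-q - 1) * N)
    rw [show j + (-q - 1) * N + N = j + -q * N by ring, ih] at this
    linarith

theorem surjective_of_add_period_eq (hf : ∀ j, |f (j + 1) - f j| ≤ 1) (hd : d ≠ 0) :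
    Function.Surjective f := by
  have hd2 : 1 ≤ d * d := by nlinarith [Int.one_le_abs hd, abs_mul_abs_self d]
  -- The values of `f` at the two witnesses are `f 0 ∓ |v - f 0| * d ^ 2`.
  refine surjective_of_abs_succ_sub_le_one hf (fun v => ?_) (fun v => ?_)
  · refine ⟨0 + (-|v - f 0| * d) * N, ?_⟩
    rw [add_mul_period_eq hfd]
    nlinarith [le_abs_self (f 0 - v), abs_sub_comm v (f 0), abs_nonneg (v - f 0)]
  · refine ⟨0 + (|v - f 0| * d) * N, ?_⟩
    rw [add_mul_period_eq hfd]
    nlinarith [le_abs_self (v - f 0), abs_nonneg (v - f 0)]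

theorem finite_fiber_of_add_period_eq (hN : 0 < N) (hd : d ≠ 0) (i : ℤ) :
    {j | f j = i}.Finite := by
  have hdecomp (j : ℤ) : f j = f (j % N) + j / N * d := by
    conv_lhs => rw [← Int.emod_add_ediv_mul j N]
    exact add_mul_period_eq hfd _ _
  refine Set.Finite.of_injOn (f := (· % N)) (t := Set.Ico 0 N) ?_ ?_ (Set.finite_Ico 0 N)
  · exact fun j _ => ⟨Int.emod_nonneg j hN.ne', Int.emod_lt_of_pos j hN⟩
  · intro j (hj : f j = i) k (hk : f k = i) (hjk : j % N = k % N)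
    have hq : j / N = k / N := by
      have := hdecomp j
      rw [hjk] at this
      exact mul_right_cancel₀ hd (by linarith [hdecomp k])
    rw [← Int.emod_add_ediv_mul j N, ← Int.emod_add_ediv_mul k N, hjk, hq]

end QuasiPeriodic

section PartialSums

variable {f s : ℤ → ℤ} (hfs : ∀ j, f (j + 1) = f j + s (j + 1))
include hfs

theorem sub_eq_sum_Icc {k : ℤ} (hk : 0 ≤ k) : f k - f 0 = ∑ t ∈ Icc 1 k, s t := by
  induction k, hk using Int.leInduction with
  | base => simp
  | succ k hk ih =>
    rw [← insert_Icc_right_eq_Icc_add_one (by omega), sum_insert (by simp), hfs, ← ih]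
    ring

theorem add_period_eq_of_periodic {N : ℤ} (hper : Function.Periodic s N) (j : ℤ) :
    f (j + N) = f j + (f N - f 0) := by
  have hinc : Function.Periodic (fun j => f (j + N) - f j) 1 := fun j => by
    show f (j + 1 + N) - f (j + 1) = f (j + N) - f j
    rw [add_right_comm, hfs, hfs, add_right_comm j N 1, hper]
    ring
  have := hinc.int_mul j 0
  simp only [Int.cast_id, mul_one, zero_add] at this
  linarith

end PartialSums

theorem sum_eq_two_mul_card_filter_sub_card {ι : Type*} (S : Finset ι) {s : ι → ℤ}
    (hs : ∀ t, s t = 1 ∨ s t = -1) :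
    ∑ t ∈ S, s t = 2 * #(S.filter (s · = 1)) - #S := by
  have (t : ι) : s t = 2 * (if s t = 1 then 1 else 0) - 1 := by
    rcases hs t with h | h <;> simp [h]
  rw [sum_congr rfl fun t _ => this t, sum_sub_distrib, ← mul_sum, sum_boole]
  simp

theorem bar_map_fibers_nonempty_finite_general
    (m n : ℕ) (hmn : m ≠ n)
    (s : ℤ → ℤ) (hs : ∀ i, s i = 1 ∨ s i = -1)
    (hper : ∀ i : ℤ, s (i + (m + n)) = s i)
    (hcount : ((Finset.Icc (1 : ℤ) (m + n)).filter (fun i => s i = 1)).card = m)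
    (bar : ℤ → ℤ)
    (hbar : ∀ j : ℤ, bar (j + 1) = bar j + s (j + 1)) :
    ∀ i : ℤ, {j : ℤ | bar j = i}.Nonempty ∧ {j : ℤ | bar j = i}.Finite := by
  have hstep (j : ℤ) : |bar (j + 1) - bar j| ≤ 1 := by
    rcases hs (j + 1) with h | h <;> simp [hbar, h]
  have hperiod_sum : bar (m + n) - bar 0 = m - n := by
    rw [sub_eq_sum_Icc hbar (by positivity), sum_eq_two_mul_card_filter_sub_card _ hs, hcount,
      Int.card_Icc]
    omega
  have hquasi (j : ℤ) : bar (j + (m + n)) = bar j + (m - n) := by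
    rw [add_period_eq_of_periodic hbar hper, hperiod_sum]
  intro i
  exact ⟨surjective_of_add_period_eq hquasi hstep (by omega) i,
    finite_fiber_of_add_period_eq hquasi (by omega) (by omega) i⟩

/-- For `m ≠ n`, every fiber `B_s(i) = {j | bar j = i}` of the bar map is a
nonempty finite set. -/
theorem bar_map_fibers_nonempty_finite
    (m n : ℕ) (hmn : m ≠ n) (hN : 3 ≤ m + n)
    (s : ℤ → ℤ) (hs : ∀ i, s i = 1 ∨ s i = -1)
    (hper : ∀ i : ℤ, s (i + (m + n)) = s i)
    (hcount : ((Finset.Icc (1 : ℤ) (m + n)).filter (fun i => s i = 1)).card = m)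
    (bar : ℤ → ℤ) (hbar0 : bar 0 = 0)
    (hbar : ∀ j : ℤ, bar (j + 1) = bar j + s (j + 1)) :
    ∀ i : ℤ, {j : ℤ | bar j = i}.Nonempty ∧ {j : ℤ | bar j = i}.Finite :=
  bar_map_fibers_nonempty_finite_general m n hmn s hs hper hcount bar hbar
end

section
/- For the bar map associated to an N-periodic parity sequence with m ≠ n, if j₁, j₂ ∈ B_s(i) (i.e. \overline{j_1} = \overline{j_2} = i) and j₁ ≠ j₂, then j₁ ≢ j₂ (mod m+n). -/
/-!
Over any window of one period the steps `s` sum to `m - n`, so `bar (j + k * (m + n)) =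
bar j + k * (m - n)`. Two points of a fiber that differ by a multiple `k * (m + n)` therefore
force `k * (m - n) = 0`, i.e. `k = 0` since `m ≠ n`.
-/

open Finset

section PeriodicIncrements

variable {G : Type*} [AddCommGroup G] {b s : ℤ → G} {p : ℤ}

theorem periodic_apply_add_sub_apply (hb : ∀ j, b (j + 1) = b j + s (j + 1))
    (hs : Function.Periodic s p) : Function.Periodic (fun j => b (j + p) - b j) 1 := by
  intro j
  show b (j + 1 + p) - b (j + 1) = b (j + p) - b j
  rw [add_right_comm, hb, hb, add_right_comm j p 1, hs]
  abel

theorem apply_add_period (hb : ∀ j, b (j + 1) = b j + s (j + 1)) (hs : Function.Periodic s p)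
    (j : ℤ) : b (j + p) = b j + (b p - b 0) := by
  have := (periodic_apply_add_sub_apply hb hs).int_mul_eq j
  simp only [Int.cast_id, mul_one, zero_add] at this
  exact sub_eq_iff_eq_add'.mp this

theorem apply_add_int_mul_period (hb : ∀ j, b (j + 1) = b j + s (j + 1))
    (hs : Function.Periodic s p) (j k : ℤ) : b (j + k * p) = b j + k • (b p - b 0) := by
  have hstep : Function.Periodic (fun k : ℤ => b (j + k * p) - k • (b p - b 0)) 1 := by
    intro k
    simp only [add_one_mul, ← add_assoc, apply_add_period hb hs, add_zsmul, one_zsmul]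
    abel
  have := hstep.int_mul_eq k
  simp only [Int.cast_id, mul_one, zero_mul, add_zero, zero_smul, sub_zero] at this
  rw [← this, sub_add_cancel]

theorem apply_sub_apply_zero_eq_sum_Icc (hb : ∀ j, b (j + 1) = b j + s (j + 1)) {k : ℤ}
    (hk : 0 ≤ k) : b k - b 0 = ∑ i ∈ Icc 1 k, s i := by
  induction k, hk using Int.leInduction with
  | base => simp
  | succ k hk ih =>
    rw [← insert_Icc_right_eq_Icc_add_one (by omega), sum_insert (by simp), ← ih, hb]
    abel

end PeriodicIncrements

theorem sum_eq_two_mul_card_filter_eq_one_sub_card {ι : Type*} {S : Finset ι} {s : ι → ℤ}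
    (hs : ∀ i, s i = 1 ∨ s i = -1) :
    ∑ i ∈ S, s i = 2 * #(S.filter (s · = 1)) - #S := by
  have hsign : ∀ i, s i = 2 * (if s i = 1 then 1 else 0) - 1 := fun i => by
    rcases hs i with h | h <;> simp [h]
  rw [sum_congr rfl fun i _ => hsign i, sum_sub_distrib, ← mul_sum, sum_boole]
  simp

theorem bar_map_fiber_incongruent_general
    (m n : ℕ) (hmn : m ≠ n)
    (s : ℤ → ℤ) (hs : ∀ i, s i = 1 ∨ s i = -1)
    (hper : ∀ i : ℤ, s (i + (m + n)) = s i)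
    (hcount : ((Finset.Icc (1 : ℤ) (m + n)).filter (fun i => s i = 1)).card = m)
    (bar : ℤ → ℤ)
    (hbar : ∀ j : ℤ, bar (j + 1) = bar j + s (j + 1)) :
    ∀ i j₁ j₂ : ℤ, bar j₁ = i → bar j₂ = i → j₁ ≠ j₂ →
      ¬ ((m + n : ℤ) ∣ (j₁ - j₂)) := by
  intro i j₁ j₂ h₁ h₂ hne ⟨k, hk⟩
  have hdrift : bar (m + n) - bar 0 = m - n := by
    rw [apply_sub_apply_zero_eq_sum_Icc hbar (by omega),
      sum_eq_two_mul_card_filter_eq_one_sub_card hs, hcount, Int.card_Icc]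
    omega
  have hshift := apply_add_int_mul_period hbar hper j₂ k
  rw [hdrift, smul_eq_mul, show j₂ + k * (m + n) = j₁ by linarith, h₁, h₂] at hshift
  have hk0 : k = 0 := by
    have : (m : ℤ) - n ≠ 0 := sub_ne_zero.mpr (by exact_mod_cast hmn)
    simpa [this] using hshift
  simp [hk0, sub_eq_zero, hne] at hk

/-- For `m ≠ n`, two distinct elements of the same fiber `B_s(i)` of the bar map
are incongruent modulo `m + n`. -/
theorem bar_map_fiber_incongruent
    (m n : ℕ) (hmn : m ≠ n) (hN : 3 ≤ m + n)
    (s : ℤ → ℤ) (hs : ∀ i, s i = 1 ∨ s i = -1)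
    (hper : ∀ i : ℤ, s (i + (m + n)) = s i)
    (hcount : ((Finset.Icc (1 : ℤ) (m + n)).filter (fun i => s i = 1)).card = m)
    (bar : ℤ → ℤ) (hbar0 : bar 0 = 0)
    (hbar : ∀ j : ℤ, bar (j + 1) = bar j + s (j + 1)) :
    ∀ i j₁ j₂ : ℤ, bar j₁ = i → bar j₂ = i → j₁ ≠ j₂ →
      ¬ ((m + n : ℤ) ∣ (j₁ - j₂)) :=
  bar_map_fiber_incongruent_general m n hmn s hs hper hcount bar hbar
end

section
/- The number of s-partitions with n boxes is greater than or equal to the number of ordinary partitions of n. (Here an s-partition is a pair (λ, μ) where λ is an s⁻₊-partition, μ is an s⁻₋-partition, ℓ(λ) ≥ ℓ(μ), the total number of boxes is |λ| + |μ| = n, and every ordinary partition λ of n gives the s-partition (λ, ∅).) -/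
/-- `l` is an `s⁻₊`-partition: positive weakly decreasing parts, with
consecutive equal parts `a = b` allowed only if `s a = -1`. -/
def IsSMinusPlusList (s : ℤ → ℤ) (l : List ℕ) : Prop :=
  (∀ x ∈ l, 0 < x) ∧
    List.Chain' (fun a b => b ≤ a ∧ (a = b → s (a : ℤ) = -1)) l

/-- `l` is an `s⁻₋`-partition: positive weakly decreasing parts, with
consecutive equal parts `a = b` allowed only if `s (−a) = -1`. -/
def IsSMinusMinusList (s : ℤ → ℤ) (l : List ℕ) : Prop :=
  (∀ x ∈ l, 0 < x) ∧
    List.Chain' (fun a b => b ≤ a ∧ (a = b → s (-(a : ℤ)) = -1)) l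

/-! Send a partition to the modified Frobenius coordinates of its Young diagram: for the
diagonal cells `(k, k)`, `k < d` (indexing from `0`), the arm lengths `λ_k - k` and the leg
lengths `λ'_k - k - 1`. Both sequences are strictly decreasing, so no two consecutive parts
are equal and the conditions involving `s` hold vacuously; at most the last leg is `0`, and
dropping it leaves at most `d` legs. The hooks of the diagonal cells partition the diagram,
so the coordinates add up to `n`, and a diagram is recovered from its arms and legs. -/

open Finset

theorem List.sum_filter_pos (l : List ℕ) : (l.filter (0 < ·)).sum = l.sum := by
  induction l with
  | nil => rfl
  | cons a l ih => rcases a.eq_zero_or_pos with rfl | ha <;> simp [*]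

theorem List.getD_filter_pos_of_pairwise_gt {l : List ℕ} (hl : l.Pairwise (· > ·)) (i : ℕ) :
    (l.filter (0 < ·)).getD i 0 = l.getD i 0 := by
  induction l generalizing i with
  | nil => rfl
  | cons a l ih =>
    rw [List.pairwise_cons] at hl
    rcases a.eq_zero_or_pos with rfl | ha
    · obtain rfl : l = [] := List.eq_nil_iff_forall_not_mem.mpr fun b hb => by
        have := hl.1 b hb; omega
      cases i <;> rfl
    · cases i with
      | zero => simp [ha]
      | succ i => simpa [ha] using ih hl.2 i

theorem List.eq_of_filter_pos_eq {l₁ l₂ : List ℕ} (h₁ : l₁.Pairwise (· > ·))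
    (h₂ : l₂.Pairwise (· > ·)) (hlen : l₁.length = l₂.length)
    (h : l₁.filter (0 < ·) = l₂.filter (0 < ·)) : l₁ = l₂ := by
  refine List.ext_getElem hlen fun i hi₁ hi₂ => ?_
  have := congrArg (·.getD i 0) h
  simp only [getD_filter_pos_of_pairwise_gt h₁, getD_filter_pos_of_pairwise_gt h₂] at this
  simpa [List.getD_eq_getElem, hi₁, hi₂] using this

theorem List.Pairwise.isChain_le_and {α : Type*} [Preorder α] {l : List α}
    (hl : l.Pairwise (· > ·)) (P : α → Prop) :
    l.IsChain fun a b => b ≤ a ∧ (a = b → P a) :=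
  hl.isChain.imp fun _ _ hab => ⟨hab.le, fun h => absurd h hab.ne'⟩

theorem List.eq_and_forall_eq_of_map_range_eq {β : Type*} {m n : ℕ} {f g : ℕ → β}
    (h : (List.range m).map f = (List.range n).map g) : m = n ∧ ∀ k < m, f k = g k := by
  obtain rfl : m = n := by simpa using congrArg List.length h
  exact ⟨rfl, fun k hk => List.map_inj_left.mp h k (List.mem_range.mpr hk)⟩

namespace YoungDiagram

theorem card_eq_sum_rowLens (μ : YoungDiagram) : μ.card = μ.rowLens.sum := by
  have hrow : Set.MapsTo Prod.fst (μ.cells : Set (ℕ × ℕ)) (range (μ.colLen 0)) := by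
    rintro ⟨i, j⟩ hc
    simpa [← mem_iff_lt_colLen] using μ.up_left_mem le_rfl (Nat.zero_le j) hc
  rw [YoungDiagram.card, card_eq_sum_card_fiberwise hrow, rowLens, sum_eq_multiset_sum]
  exact congrArg Multiset.sum (Multiset.map_congr rfl fun i _ => (μ.rowLen_eq_card).symm)

theorem card_ofRowLens {w : List ℕ} (hw : w.SortedGE) (hpos : ∀ x ∈ w, 0 < x) :
    (ofRowLens w hw).card = w.sum := by
  rw [card_eq_sum_rowLens, rowLens_ofRowLens_eq_self hpos]

variable (μ : YoungDiagram)

theorem exists_notMem_diag : ∃ k, (k, k) ∉ μ :=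
  ⟨μ.colLen 0 + μ.rowLen 0, fun h => by
    have := mem_iff_lt_rowLen.mp (μ.up_left_mem (Nat.zero_le _) le_rfl h); omega⟩

/-- The side length of the Durfee square: the number of cells on the main diagonal. -/
def durfee : ℕ := Nat.find μ.exists_notMem_diag

variable {μ}

theorem mem_diag_iff {k : ℕ} : (k, k) ∈ μ ↔ k < μ.durfee := by
  rw [durfee, Nat.lt_find_iff]
  refine ⟨fun h m hm => not_not.mpr (μ.up_left_mem hm hm h), fun h => not_not.mp (h k le_rfl)⟩

theorem lt_rowLen_of_lt_durfee {k : ℕ} (hk : k < μ.durfee) : k < μ.rowLen k :=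
  mem_iff_lt_rowLen.mp (mem_diag_iff.mpr hk)

theorem lt_colLen_of_lt_durfee {k : ℕ} (hk : k < μ.durfee) : k < μ.colLen k :=
  mem_iff_lt_colLen.mp (mem_diag_iff.mpr hk)

@[simp]
theorem durfee_transpose : μ.transpose.durfee = μ.durfee :=
  le_antisymm (Nat.find_mono fun _ => by simp) (Nat.find_mono fun _ => by simp)

theorem mem_iff_of_le {i j : ℕ} (hij : i ≤ j) : (i, j) ∈ μ ↔ i < μ.durfee ∧ j < μ.rowLen i :=
  ⟨fun h => ⟨mem_diag_iff.mp (μ.up_left_mem le_rfl hij h), mem_iff_lt_rowLen.mp h⟩,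
    fun h => mem_iff_lt_rowLen.mpr h.2⟩

theorem mem_iff_of_ge {i j : ℕ} (hji : j ≤ i) :
    (i, j) ∈ μ ↔ j < μ.durfee ∧ i < μ.colLen j := by
  rw [← durfee_transpose, ← rowLen_transpose, ← mem_iff_of_le hji, mem_transpose,
    Prod.swap_prod_mk]

/-- The fibres of `min` on the cells are the hooks of the diagonal cells. -/
theorem card_eq_sum_hooks :
    μ.card = ∑ k ∈ range μ.durfee, ((μ.rowLen k - k) + (μ.colLen k - (k + 1))) := by
  have hmin : Set.MapsTo (fun c : ℕ × ℕ => min c.1 c.2) (μ.cells : Set (ℕ × ℕ))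
      (range μ.durfee) := by
    rintro ⟨i, j⟩ hc
    exact mem_range.mpr (mem_diag_iff.mp (μ.up_left_mem (min_le_left i j) (min_le_right i j) hc))
  rw [YoungDiagram.card, card_eq_sum_card_fiberwise hmin]
  refine sum_congr rfl fun k hk => ?_
  have hrow := lt_rowLen_of_lt_durfee (mem_range.mp hk)
  have hcol := lt_colLen_of_lt_durfee (mem_range.mp hk)
  have hhook : {c ∈ μ.cells | min c.1 c.2 = k} =
      ({k} ×ˢ Ico k (μ.rowLen k)).disjUnion (Ioo k (μ.colLen k) ×ˢ {k})
        (disjoint_product.mpr (.inl (disjoint_singleton_left.mpr (by simp)))) := by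
    ext ⟨i, j⟩
    simp only [mem_filter, mem_cells, mem_disjUnion, mem_product, mem_singleton, mem_Ico, mem_Ioo]
    constructor
    · rintro ⟨h, rfl⟩
      rcases le_total i j with hij | hij
      · have := mem_iff_lt_rowLen.mp h
        grind
      · have := mem_iff_lt_colLen.mp h
        grind
    · rintro (⟨rfl, hj, hjr⟩ | ⟨⟨hi, hic⟩, rfl⟩)
      · exact ⟨mem_iff_lt_rowLen.mpr hjr, min_eq_left hj⟩
      · exact ⟨mem_iff_lt_colLen.mpr hic, min_eq_right hi.le⟩
  rw [hhook, card_disjUnion, card_product, card_product]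
  simp [Nat.sub_sub]

variable (μ)

def armLens : List ℕ := (List.range μ.durfee).map fun k => μ.rowLen k - k

/-- Unlike the arm lengths, these do not count the diagonal cell, so the last may be `0`. -/
def legLens : List ℕ := (List.range μ.durfee).map fun k => μ.colLen k - (k + 1)

@[simp] theorem length_armLens : μ.armLens.length = μ.durfee := by simp [armLens]

@[simp] theorem length_legLens : μ.legLens.length = μ.durfee := by simp [legLens]

theorem pos_of_mem_armLens {a : ℕ} (ha : a ∈ μ.armLens) : 0 < a := by
  obtain ⟨k, hk, rfl⟩ := List.mem_map.mp ha
  have := lt_rowLen_of_lt_durfee (List.mem_range.mp hk)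
  omega

theorem armLens_pairwise_gt : μ.armLens.Pairwise (· > ·) :=
  List.pairwise_map.mpr <| List.pairwise_lt_range.imp_of_mem fun {i j} _ hj hij => by
    have := lt_rowLen_of_lt_durfee (List.mem_range.mp hj)
    have := μ.rowLen_anti i j hij.le
    omega

theorem legLens_pairwise_gt : μ.legLens.Pairwise (· > ·) :=
  List.pairwise_map.mpr <| List.pairwise_lt_range.imp_of_mem fun {i j} _ hj hij => by
    have := lt_colLen_of_lt_durfee (List.mem_range.mp hj)
    have := μ.colLen_anti i j hij.le
    omega

theorem sum_armLens_add_sum_legLens : μ.armLens.sum + μ.legLens.sum = μ.card := by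
  rw [card_eq_sum_hooks, sum_add_distrib, armLens, legLens, sum_eq_multiset_sum,
    sum_eq_multiset_sum]
  rfl

variable {μ}

theorem eq_of_armLens_eq_of_legLens_eq {ν : YoungDiagram} (harm : μ.armLens = ν.armLens)
    (hleg : μ.legLens = ν.legLens) : μ = ν := by
  obtain ⟨hd, harm⟩ := List.eq_and_forall_eq_of_map_range_eq harm
  obtain ⟨-, hleg⟩ := List.eq_and_forall_eq_of_map_range_eq hleg
  ext ⟨i, j⟩
  rw [mem_cells, mem_cells]
  rcases le_total i j with hij | hji
  · rw [mem_iff_of_le hij, mem_iff_of_le hij, ← hd]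
    refine and_congr_right fun hi => ?_
    have := harm i hi
    have := lt_rowLen_of_lt_durfee hi
    have := lt_rowLen_of_lt_durfee (hd ▸ hi)
    omega
  · rw [mem_iff_of_ge hji, mem_iff_of_ge hji, ← hd]
    refine and_congr_right fun hj => ?_
    have := hleg j hj
    have := lt_colLen_of_lt_durfee hj
    have := lt_colLen_of_lt_durfee (hd ▸ hj)
    omega

variable (μ) in
/-- Modified Frobenius coordinates: arms counting the diagonal cell, and the nonzero legs. -/
def frobeniusCoords : List ℕ × List ℕ := (μ.armLens, μ.legLens.filter (0 < ·))

theorem frobeniusCoords_injective : Function.Injective frobeniusCoords := by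
  intro μ ν h
  simp only [frobeniusCoords, Prod.mk.injEq] at h
  obtain ⟨harm, hleg⟩ := h
  have hd : μ.durfee = ν.durfee := by simpa using congrArg List.length harm
  exact eq_of_armLens_eq_of_legLens_eq harm <|
    List.eq_of_filter_pos_eq μ.legLens_pairwise_gt ν.legLens_pairwise_gt (by simp [hd]) hleg

end YoungDiagram

namespace Nat.Partition

variable {n : ℕ}

def toYoungDiagram (p : n.Partition) : YoungDiagram :=
  YoungDiagram.ofRowLens (p.parts.sort (· ≥ ·)) (Multiset.pairwise_sort _ _).sortedGE

theorem pos_of_mem_sort_parts (p : n.Partition) {x : ℕ} (hx : x ∈ p.parts.sort (· ≥ ·)) :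
    0 < x :=
  p.parts_pos ((Multiset.mem_sort ..).mp hx)

theorem card_toYoungDiagram (p : n.Partition) : p.toYoungDiagram.card = n := by
  rw [toYoungDiagram, YoungDiagram.card_ofRowLens _ fun _ => p.pos_of_mem_sort_parts,
    ← Multiset.sum_coe, Multiset.sort_eq, p.parts_sum]

theorem toYoungDiagram_injective : Function.Injective (toYoungDiagram (n := n)) := by
  intro p q h
  have hrows := congrArg YoungDiagram.rowLens h
  rw [toYoungDiagram, toYoungDiagram,
    YoungDiagram.rowLens_ofRowLens_eq_self fun _ => p.pos_of_mem_sort_parts,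
    YoungDiagram.rowLens_ofRowLens_eq_self fun _ => q.pos_of_mem_sort_parts] at hrows
  ext1
  rw [← Multiset.sort_eq p.parts (· ≥ ·), ← Multiset.sort_eq q.parts (· ≥ ·), hrows]

end Nat.Partition

theorem isSMinusPlusList_of_pairwise_gt (s : ℤ → ℤ) {l : List ℕ} (hpos : ∀ x ∈ l, 0 < x)
    (hl : l.Pairwise (· > ·)) : IsSMinusPlusList s l := by
  refine ⟨hpos, ?_⟩
  -- the chain relation lives on `ℤ`, so `l` enters it coerced through the list monad
  simp only [List.pure_def, List.bind_eq_flatMap, ← List.map_eq_flatMap]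
  exact (List.pairwise_map.mpr (hl.imp Nat.cast_lt.mpr)).isChain_le_and _

theorem isSMinusMinusList_of_pairwise_gt (s : ℤ → ℤ) {l : List ℕ} (hpos : ∀ x ∈ l, 0 < x)
    (hl : l.Pairwise (· > ·)) : IsSMinusMinusList s l := by
  refine ⟨hpos, ?_⟩
  simp only [List.pure_def, List.bind_eq_flatMap, ← List.map_eq_flatMap]
  exact (List.pairwise_map.mpr (hl.imp Nat.cast_lt.mpr)).isChain_le_and _

open YoungDiagram in
theorem sPartitions_at_least_partitions_general
    (s : ℤ → ℤ) (n : ℕ) :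
    ∃ f : n.Partition →
        {p : List ℕ × List ℕ //
          IsSMinusPlusList s p.1 ∧ IsSMinusMinusList s p.2 ∧
            p.2.length ≤ p.1.length ∧ p.1.sum + p.2.sum = n},
      Function.Injective f := by
  refine ⟨fun p => ⟨p.toYoungDiagram.frobeniusCoords, ?_, ?_, ?_, ?_⟩, ?_⟩
  · exact isSMinusPlusList_of_pairwise_gt s (fun _ => pos_of_mem_armLens _)
      (armLens_pairwise_gt _)
  · exact isSMinusMinusList_of_pairwise_gt s (fun _ hx => by simpa using (List.mem_filter.mp hx).2)
      ((legLens_pairwise_gt _).filter _)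
  · exact (List.length_filter_le _ _).trans (by simp [frobeniusCoords])
  · rw [frobeniusCoords, List.sum_filter_pos, sum_armLens_add_sum_legLens, p.card_toYoungDiagram]
  · exact fun p q h =>
      Nat.Partition.toYoungDiagram_injective (frobeniusCoords_injective (congrArg Subtype.val h))

/-- The number of `s`-partitions with `n` boxes is at least the number of
ordinary partitions of `n`: there is an injection from partitions of `n` into
pairs `(λ, μ)` with `λ` an `s⁻₊`-partition, `μ` an `s⁻₋`-partition,
`ℓ(λ) ≥ ℓ(μ)` and `|λ| + |μ| = n`. -/
theorem sPartitions_at_least_partitions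
    (s : ℤ → ℤ) (hs : ∀ i, s i = 1 ∨ s i = -1) (n : ℕ) :
    ∃ f : n.Partition →
        {p : List ℕ × List ℕ //
          IsSMinusPlusList s p.1 ∧ IsSMinusMinusList s p.2 ∧
            p.2.length ≤ p.1.length ∧ p.1.sum + p.2.sum = n},
      Function.Injective f :=
  sPartitions_at_least_partitions_general s n
end

section
/- There is a grading-preserving bijection between the set of plane s-partitions (with vertex color k and infinitely many layers, all but finitely many empty) and the set of admissible pairs (T⁽¹⁾, T⁽²⁾) of reverse semistandard Young super-tableaux of the same shape, where T⁽¹⁾ has parity s and T⁽²⁾ has parity s' (s'_i = s_{1−i}), given by reading λ⁽ⁱ⁾ as column i of T⁽¹⁾ and μ⁽ⁱ⁾ + 1 as column i of T⁽²⁾. -/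
/-- A partition written as a function: weakly decreasing, finitely many
nonzero parts. -/
def IsPartFun (f : ℕ → ℕ) : Prop :=
  (∀ i j : ℕ, i ≤ j → f j ≤ f i) ∧ ∃ n : ℕ, ∀ m : ℕ, n ≤ m → f m = 0

/-- A layer of a plane `s`-partition (with vertex color `0`, `s 0 = -1`): a
pair `(λ, μ)` of partitions with `ℓ(λ) ≥ ℓ(μ)`, consecutive equal parts of `λ`
allowed only at odd colors (`s λᵢ = -1`), and similarly for `μ`
(`s (-μᵢ) = -1`). -/
def IsSPartLayer (s : ℤ → ℤ) (p : (ℕ → ℕ) × (ℕ → ℕ)) : Prop :=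
  IsPartFun p.1 ∧ IsPartFun p.2 ∧
  (∀ i, p.1 (i + 1) = p.1 i → s ((p.1 i : ℤ)) = -1 ∨ p.1 i = 0) ∧
  (∀ i, p.2 (i + 1) = p.2 i → s (-(p.2 i : ℤ)) = -1 ∨ p.2 i = 0) ∧
  (∀ i, p.2 i ≠ 0 → p.1 i ≠ 0)

/-- The relation `(λ⁽¹⁾,μ⁽¹⁾) ≥₀ (λ⁽²⁾,μ⁽²⁾)`. -/
def GeRelZero (s : ℤ → ℤ) (p q : (ℕ → ℕ) × (ℕ → ℕ)) : Prop :=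
  (∀ i, q.1 i ≠ 0 → p.2 i ≠ 0) ∧
  (∀ i, q.1 i ≠ 0 → p.1 i ≠ 0) ∧
  (∀ i, q.2 i ≠ 0 → p.2 i ≠ 0) ∧
  (∀ i, q.1 i ≤ p.1 i ∧
    (q.1 i = p.1 i → s ((p.1 i : ℤ)) = -s 0 ∨ p.1 i = 0)) ∧
  (∀ i, q.2 i ≤ p.2 i ∧
    (q.2 i = p.2 i → s (-(p.2 i : ℤ)) = -s 0 ∨ p.2 i = 0))

/-- A plane `s`-partition (vertex color `0`): a sequence of layers, each an
`s`-partition, consecutive layers comparable by `≥₀`, all but finitely many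
layers empty. -/
def IsPlaneSPart (s : ℤ → ℤ) (L : ℕ → (ℕ → ℕ) × (ℕ → ℕ)) : Prop :=
  (∀ j, IsSPartLayer s (L j)) ∧
  (∀ j, GeRelZero s (L j) (L (j + 1))) ∧
  (∃ J : ℕ, ∀ j, J ≤ j → ∀ i, (L j).1 i = 0 ∧ (L j).2 i = 0)

/-- A reverse semistandard Young super-tableau of parity `s`, encoded as a
function `T : rows × columns → ℕ` vanishing outside its (finite, Young-diagram
shaped) support: entries weakly decrease along rows with equality allowed only
if `s (entry) = 1`, and weakly decrease down columns with equality allowed only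
if `s (entry) = -1`. -/
def IsRSSYT (s : ℤ → ℤ) (T : ℕ → ℕ → ℕ) : Prop :=
  (∀ i j j' : ℕ, j' ≤ j → T i j ≠ 0 → T i j' ≠ 0) ∧
  (∀ i i' j : ℕ, i' ≤ i → T i j ≠ 0 → T i' j ≠ 0) ∧
  (∀ i j, T i (j + 1) ≠ 0 →
    T i (j + 1) ≤ T i j ∧ (T i (j + 1) = T i j → s ((T i j : ℤ)) = 1)) ∧
  (∀ i j, T (i + 1) j ≠ 0 →
    T (i + 1) j ≤ T i j ∧ (T (i + 1) j = T i j → s ((T i j : ℤ)) = -1)) ∧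
  (∃ M : ℕ, ∀ i j, M ≤ i ∨ M ≤ j → T i j = 0)

/-- The number of boxes of color `c ∈ ℤ` of a plane `s`-partition: row `i` of
`λ⁽ʲ⁾` contributes boxes of colors `0, …, λ⁽ʲ⁾ᵢ − 1`, and row `i` of `μ⁽ʲ⁾`
contributes boxes of colors `−1, …, −μ⁽ʲ⁾ᵢ`. -/
noncomputable def countPlane (L : ℕ → (ℕ → ℕ) × (ℕ → ℕ)) (c : ℤ) : ℕ :=
  {p : ℕ × ℕ | 0 ≤ c ∧ c < ((L p.1).1 p.2 : ℤ)}.ncard +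
    {p : ℕ × ℕ | -(((L p.1).2 p.2 : ℤ)) ≤ c ∧ c ≤ -1}.ncard

/-- The number of boxes of color `c ∈ ℤ` attached to a pair of tableaux: a box
of `T⁽¹⁾` with entry `a` has degree `z₀z₁⋯z_{a−1}` (one box of each color
`0, …, a − 1`), and a box of `T⁽²⁾` with entry `a` has degree
`z₋₁⋯z₋₍ₐ₋₁₎` (one box of each color `−1, …, −(a−1)`). -/
noncomputable def countTabPair (T₁ T₂ : ℕ → ℕ → ℕ) (c : ℤ) : ℕ :=
  {p : ℕ × ℕ | 0 ≤ c ∧ c < (T₁ p.1 p.2 : ℤ)}.ncard +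
    {p : ℕ × ℕ | -((T₂ p.1 p.2 : ℤ) - 1) ≤ c ∧ c ≤ -1}.ncard

/-!
Writing `λ⁽ʲ⁾` as column `j` of `T⁽¹⁾` turns the inequalities *within* a layer into the column
conditions of `T⁽¹⁾` and the relations `≥₀` *between* consecutive layers into its row conditions;
the same holds for `μ⁽ʲ⁾ + 1` and `T⁽²⁾`, the shift by one matching the reflected parity
`s'ₐ = s₁₋ₐ` (an entry `a = μ + 1` has `s'ₐ = s₋μ`). The one condition of `≥₀` linking `λ` to `μ`,
that a box of `λ⁽ʲ⁺¹⁾` forces a nonzero part of `μ⁽ʲ⁾`, says that `T⁽²⁾` has no entry `1` with a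
right neighbour. Transposition preserves the number of boxes of each color.
-/

namespace PlaneSPart

theorem isRSSYT_iff {s : ℤ → ℤ} {T : ℕ → ℕ → ℕ} :
    IsRSSYT s T ↔
      (∀ i j, T i (j + 1) ≤ T i j ∧
        (T i (j + 1) = T i j → s (T i j : ℤ) = 1 ∨ T i j = 0)) ∧
      (∀ i j, T (i + 1) j ≤ T i j ∧
        (T (i + 1) j = T i j → s (T i j : ℤ) = -1 ∨ T i j = 0)) ∧
      ∃ M, ∀ i j, M ≤ i ∨ M ≤ j → T i j = 0 := by
  constructor
  · rintro ⟨-, -, hrow, hcol, hfin⟩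
    refine ⟨fun i j => ?_, fun i j => ?_, hfin⟩
    · by_cases h : T i (j + 1) = 0
      · exact ⟨by omega, fun he => Or.inr (by omega)⟩
      · exact ⟨(hrow i j h).1, fun he => Or.inl ((hrow i j h).2 he)⟩
    · by_cases h : T (i + 1) j = 0
      · exact ⟨by omega, fun he => Or.inr (by omega)⟩
      · exact ⟨(hcol i j h).1, fun he => Or.inl ((hcol i j h).2 he)⟩
  · rintro ⟨hrow, hcol, hfin⟩
    have row_anti (i : ℕ) : Antitone (T i) := antitone_nat_of_succ_le fun j => (hrow i j).1
    have col_anti (j : ℕ) : Antitone (T · j) := antitone_nat_of_succ_le fun i => (hcol i j).1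
    refine ⟨fun i j j' h hne => ?_, fun i i' j h hne => ?_, fun i j hne => ?_,
      fun i j hne => ?_, hfin⟩
    · have := row_anti i h; omega
    · have := col_anti j h; dsimp only at this; omega
    · exact ⟨(hrow i j).1, fun he => ((hrow i j).2 he).resolve_right (by omega)⟩
    · exact ⟨(hcol i j).1, fun he => ((hcol i j).2 he).resolve_right (by omega)⟩

theorem eq_imp_reflect_succ {s : ℤ → ℤ} {ε : ℤ} {a b : ℕ}
    (h : b = a → s (-(a : ℤ)) = ε ∨ a = 0) (h0 : b = a → a = 0 → s 0 = ε) :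
    b + 1 = a + 1 → s (1 - ((a + 1 : ℕ) : ℤ)) = ε := by
  intro hab
  have e : 1 - ((a + 1 : ℕ) : ℤ) = -(a : ℤ) := by push_cast; ring
  rw [e]
  rcases h (by omega) with h | rfl
  · exact h
  · exact h0 (by omega) rfl

theorem eq_imp_reflect_pred {s : ℤ → ℤ} {ε : ℤ} {a b : ℕ}
    (h : b = a → s (1 - (a : ℤ)) = ε ∨ a = 0) :
    b - 1 = a - 1 → s (-((a - 1 : ℕ) : ℤ)) = ε ∨ a - 1 = 0 := by
  intro hab
  rcases Nat.lt_or_ge a 2 with ha | ha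
  · exact Or.inr (by omega)
  · have e : -((a - 1 : ℕ) : ℤ) = 1 - a := by omega
    rw [e]
    exact Or.inl ((h (by omega)).resolve_right (by omega))

def tableau₁ (L : ℕ → (ℕ → ℕ) × (ℕ → ℕ)) : ℕ → ℕ → ℕ := fun i j => (L j).1 i

def tableau₂ (L : ℕ → (ℕ → ℕ) × (ℕ → ℕ)) : ℕ → ℕ → ℕ :=
  fun i j => if (L j).1 i ≠ 0 then (L j).2 i + 1 else 0

def ofTableaux (T : (ℕ → ℕ → ℕ) × (ℕ → ℕ → ℕ)) : ℕ → (ℕ → ℕ) × (ℕ → ℕ) :=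
  fun j => (fun i => T.1 i j, fun i => T.2 i j - 1)

theorem tableau₂_ne_zero_iff {L : ℕ → (ℕ → ℕ) × (ℕ → ℕ)} {i j : ℕ} :
    tableau₂ L i j ≠ 0 ↔ tableau₁ L i j ≠ 0 := by
  by_cases h : (L j).1 i = 0 <;> simp [tableau₂, tableau₁, h]

section Forward

variable {s : ℤ → ℤ} {L : ℕ → (ℕ → ℕ) × (ℕ → ℕ)}

theorem exists_bound_of_isPlaneSPart (hL : IsPlaneSPart s L) :
    ∃ M, ∀ i j, M ≤ i ∨ M ≤ j → (L j).1 i = 0 := by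
  obtain ⟨hlay, -, J, hJ⟩ := hL
  choose n hn using fun j => (hlay j).1.2
  refine ⟨J + (Finset.range J).sup n, fun i j h => ?_⟩
  rcases le_or_gt J j with hj | hj
  · exact (hJ j hj i).1
  · have : n j ≤ (Finset.range J).sup n := Finset.le_sup (Finset.mem_range.2 hj)
    exact hn j i (by omega)

theorem isRSSYT_tableau₁ (hs0 : s 0 = -1) (hL : IsPlaneSPart s L) :
    IsRSSYT s (tableau₁ L) := by
  obtain ⟨M, hM⟩ := exists_bound_of_isPlaneSPart hL
  obtain ⟨hlay, hge, -⟩ := hL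
  refine isRSSYT_iff.2 ⟨fun i j => ?_, fun i j => ?_, M, hM⟩
  · simpa [tableau₁, hs0] using (hge j).2.2.2.1 i
  · exact ⟨(hlay j).1.1 i (i + 1) i.le_succ, (hlay j).2.2.1 i⟩

theorem isRSSYT_tableau₂ (hs0 : s 0 = -1) (hL : IsPlaneSPart s L) :
    IsRSSYT (fun a => s (1 - a)) (tableau₂ L) := by
  have h₁ := isRSSYT_tableau₁ hs0 hL
  obtain ⟨M, hM⟩ := exists_bound_of_isPlaneSPart hL
  obtain ⟨hlay, hge, -⟩ := hL
  refine isRSSYT_iff.2 ⟨fun i j => ?_, fun i j => ?_, M, fun i j h => by simp [tableau₂, hM i j h]⟩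
  · by_cases h : (L (j + 1)).1 i = 0
    · simp +contextual [tableau₂, h]
    · have hj : (L j).1 i ≠ 0 := h₁.1 i (j + 1) j j.le_succ h
      have hμ : (L j).2 i ≠ 0 := (hge j).1 i h
      obtain ⟨hle, heq⟩ := (hge j).2.2.2.2 i
      simp only [tableau₂, ne_eq, h, hj, not_false_eq_true, if_true]
      refine ⟨by omega, fun he => Or.inl ?_⟩
      exact eq_imp_reflect_succ (by simpa [hs0] using heq) (fun _ h0 => absurd h0 hμ) he
  · by_cases h : (L j).1 (i + 1) = 0
    · simp +contextual [tableau₂, h]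
    · have hi : (L j).1 i ≠ 0 := h₁.2.1 (i + 1) i j i.le_succ h
      simp only [tableau₂, ne_eq, h, hi, not_false_eq_true, if_true]
      refine ⟨by have := (hlay j).2.1.1 i (i + 1) i.le_succ; omega, fun he => Or.inl ?_⟩
      exact eq_imp_reflect_succ ((hlay j).2.2.2.1 i) (fun _ _ => hs0) he

end Forward

section Backward

variable {s : ℤ → ℤ} {T : (ℕ → ℕ → ℕ) × (ℕ → ℕ → ℕ)}

theorem isSPartLayer_ofTableaux (h₁ : IsRSSYT s T.1) (h₂ : IsRSSYT (fun a => s (1 - a)) T.2)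
    (hsh : ∀ i j, T.1 i j ≠ 0 ↔ T.2 i j ≠ 0) (j : ℕ) :
    IsSPartLayer s (ofTableaux T j) := by
  obtain ⟨-, hcol₁, M₁, hM₁⟩ := isRSSYT_iff.1 h₁
  obtain ⟨-, hcol₂, M₂, hM₂⟩ := isRSSYT_iff.1 h₂
  refine ⟨⟨?_, M₁, fun i hi => hM₁ i j (Or.inl hi)⟩, ⟨?_, M₂, fun i hi => ?_⟩,
    fun i => (hcol₁ i j).2, fun i => eq_imp_reflect_pred (hcol₂ i j).2, fun i h => ?_⟩
  · exact fun _ _ h => (antitone_nat_of_succ_le fun i => (hcol₁ i j).1 :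
      Antitone fun i => T.1 i j) h
  · exact fun _ _ h => (antitone_nat_of_succ_le fun i => Nat.sub_le_sub_right (hcol₂ i j).1 1 :
      Antitone fun i => T.2 i j - 1) h
  · simp [ofTableaux, hM₂ i j (Or.inl hi)]
  · exact (hsh i j).2 (by simp only [ofTableaux] at h; omega)

/-- An entry `1` of `T⁽²⁾` with a right neighbour would force `s'₁ = s₀ = 1`. -/
theorem two_le_of_ne_zero_right (hs0 : s 0 = -1) (h₁ : IsRSSYT s T.1)
    (h₂ : IsRSSYT (fun a => s (1 - a)) T.2) (hsh : ∀ i j, T.1 i j ≠ 0 ↔ T.2 i j ≠ 0)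
    {i j : ℕ} (h : T.1 i (j + 1) ≠ 0) : 2 ≤ T.2 i j := by
  have hj : T.2 i j ≠ 0 := (hsh i j).1 (h₁.1 i (j + 1) j j.le_succ h)
  have hj' : T.2 i (j + 1) ≠ 0 := (hsh i (j + 1)).1 h
  obtain ⟨hle, heq⟩ := h₂.2.2.1 i j hj'
  by_contra hlt
  have hval := heq (by omega)
  rw [show T.2 i j = 1 by omega] at hval
  norm_num [hs0] at hval

theorem geRelZero_ofTableaux (hs0 : s 0 = -1) (h₁ : IsRSSYT s T.1)
    (h₂ : IsRSSYT (fun a => s (1 - a)) T.2) (hsh : ∀ i j, T.1 i j ≠ 0 ↔ T.2 i j ≠ 0) (j : ℕ) :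
    GeRelZero s (ofTableaux T j) (ofTableaux T (j + 1)) := by
  obtain ⟨hrow₁, -, -⟩ := isRSSYT_iff.1 h₁
  obtain ⟨hrow₂, -, -⟩ := isRSSYT_iff.1 h₂
  refine ⟨fun i h => ?_, fun i h => ?_, fun i h => ?_, fun i => ?_, fun i => ?_⟩
  · have := two_le_of_ne_zero_right hs0 h₁ h₂ hsh h
    simp only [ofTableaux]; omega
  · have := (hrow₁ i j).1; dsimp only [ofTableaux] at h ⊢; omega
  · have := (hrow₂ i j).1; dsimp only [ofTableaux] at h ⊢; omega
  · simpa [ofTableaux, hs0] using hrow₁ i j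
  · refine ⟨Nat.sub_le_sub_right (hrow₂ i j).1 1, ?_⟩
    simpa [ofTableaux, hs0] using eq_imp_reflect_pred (hrow₂ i j).2

theorem isPlaneSPart_ofTableaux (hs0 : s 0 = -1) (h₁ : IsRSSYT s T.1)
    (h₂ : IsRSSYT (fun a => s (1 - a)) T.2) (hsh : ∀ i j, T.1 i j ≠ 0 ↔ T.2 i j ≠ 0) :
    IsPlaneSPart s (ofTableaux T) := by
  obtain ⟨M₁, hM₁⟩ := h₁.2.2.2.2
  obtain ⟨M₂, hM₂⟩ := h₂.2.2.2.2
  refine ⟨isSPartLayer_ofTableaux h₁ h₂ hsh, geRelZero_ofTableaux hs0 h₁ h₂ hsh,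
    max M₁ M₂, fun j hj i => ?_⟩
  simp [ofTableaux, hM₁ i j (Or.inr (le_of_max_le_left hj)),
    hM₂ i j (Or.inr (le_of_max_le_right hj))]

end Backward

theorem ofTableaux_tableau₁_tableau₂ {L : ℕ → (ℕ → ℕ) × (ℕ → ℕ)}
    (hL : ∀ j i, (L j).2 i ≠ 0 → (L j).1 i ≠ 0) :
    ofTableaux (tableau₁ L, tableau₂ L) = L := by
  funext j
  refine Prod.ext rfl (funext fun i => ?_)
  by_cases h : (L j).1 i = 0
  · simp [ofTableaux, tableau₂, h, not_imp_not.1 (hL j i) h]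
  · simp [ofTableaux, tableau₂, h]

theorem tableau₂_ofTableaux {T : (ℕ → ℕ → ℕ) × (ℕ → ℕ → ℕ)}
    (hsh : ∀ i j, T.1 i j ≠ 0 ↔ T.2 i j ≠ 0) :
    tableau₂ (ofTableaux T) = T.2 := by
  funext i j
  by_cases h : T.1 i j = 0
  · simp [ofTableaux, tableau₂, h, not_imp_not.1 (hsh i j).2 h]
  · have := (hsh i j).1 h
    simp only [tableau₂, ofTableaux, ne_eq, h, not_false_eq_true, if_true]
    omega

theorem ncard_preimage_swap {α β : Type*} (S : Set (α × β)) :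
    (Prod.swap ⁻¹' S).ncard = S.ncard := by
  rw [← Set.image_swap_eq_preimage_swap, Set.ncard_image_of_injective _ Prod.swap_injective]

theorem countPlane_eq_countTabPair {L : ℕ → (ℕ → ℕ) × (ℕ → ℕ)}
    (hL : ∀ j i, (L j).2 i ≠ 0 → (L j).1 i ≠ 0) (c : ℤ) :
    countPlane L c = countTabPair (tableau₁ L) (tableau₂ L) c := by
  unfold countPlane countTabPair
  congr 1 <;> rw [← ncard_preimage_swap]
  · rfl
  congr 1
  ext ⟨i, j⟩
  by_cases h : (L j).1 i = 0
  · simp only [Set.mem_preimage, Prod.swap_prod_mk, Set.mem_ofPred_eq, tableau₂, h,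
      not_imp_not.1 (hL j i) h, ne_eq, not_true_eq_false, if_false]
    omega
  · simp only [Set.mem_preimage, Prod.swap_prod_mk, Set.mem_ofPred_eq, tableau₂, h, ne_eq,
      not_false_eq_true, if_true]
    push_cast
    omega

def equivTableaux (s : ℤ → ℤ) (hs0 : s 0 = -1) :
    {L : ℕ → (ℕ → ℕ) × (ℕ → ℕ) // IsPlaneSPart s L} ≃
      {T : (ℕ → ℕ → ℕ) × (ℕ → ℕ → ℕ) //
        IsRSSYT s T.1 ∧ IsRSSYT (fun i => s (1 - i)) T.2 ∧ ∀ i j, T.1 i j ≠ 0 ↔ T.2 i j ≠ 0} where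
  toFun L := ⟨(tableau₁ L.1, tableau₂ L.1), isRSSYT_tableau₁ hs0 L.2, isRSSYT_tableau₂ hs0 L.2,
    fun _ _ => tableau₂_ne_zero_iff.symm⟩
  invFun T := ⟨ofTableaux T.1, isPlaneSPart_ofTableaux hs0 T.2.1 T.2.2.1 T.2.2.2⟩
  left_inv L := Subtype.ext (ofTableaux_tableau₁_tableau₂ fun j => (L.2.1 j).2.2.2.2)
  right_inv T := Subtype.ext (Prod.ext rfl (tableau₂_ofTableaux T.2.2.2))

end PlaneSPart

theorem planeSPartitions_equiv_tableaux_pairs_general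
    (s : ℤ → ℤ) (hs0 : s 0 = -1) :
    ∃ Φ : {L : ℕ → (ℕ → ℕ) × (ℕ → ℕ) // IsPlaneSPart s L} →
        {T : (ℕ → ℕ → ℕ) × (ℕ → ℕ → ℕ) //
          IsRSSYT s T.1 ∧ IsRSSYT (fun i => s (1 - i)) T.2 ∧
            ∀ i j, T.1 i j ≠ 0 ↔ T.2 i j ≠ 0},
      Function.Bijective Φ ∧
      (∀ L, (Φ L).1.1 = fun i j => (L.1 j).1 i) ∧
      (∀ L, (Φ L).1.2 = fun i j =>
        if (L.1 j).1 i ≠ 0 then (L.1 j).2 i + 1 else 0) ∧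
      (∀ L (c : ℤ), countPlane L.1 c = countTabPair (Φ L).1.1 (Φ L).1.2 c) :=
  ⟨PlaneSPart.equivTableaux s hs0, (PlaneSPart.equivTableaux s hs0).bijective,
    fun _ => rfl, fun _ => rfl,
    fun L => PlaneSPart.countPlane_eq_countTabPair fun j => (L.2.1 j).2.2.2.2⟩

/-- The map reading `λ⁽ʲ⁾` as column `j` of `T⁽¹⁾` and `μ⁽ʲ⁾ + 1` as column
`j` of `T⁽²⁾` is a grading-preserving bijection from plane `s`-partitions to
admissible pairs `(T⁽¹⁾, T⁽²⁾)` of reverse semistandard Young super-tableaux of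
the same shape, `T⁽¹⁾` of parity `s` and `T⁽²⁾` of parity `s'`,
`s'_i = s_{1−i}`. -/
theorem planeSPartitions_equiv_tableaux_pairs
    (s : ℤ → ℤ) (hs : ∀ i, s i = 1 ∨ s i = -1) (hs0 : s 0 = -1) :
    ∃ Φ : {L : ℕ → (ℕ → ℕ) × (ℕ → ℕ) // IsPlaneSPart s L} →
        {T : (ℕ → ℕ → ℕ) × (ℕ → ℕ → ℕ) //
          IsRSSYT s T.1 ∧ IsRSSYT (fun i => s (1 - i)) T.2 ∧
            ∀ i j, T.1 i j ≠ 0 ↔ T.2 i j ≠ 0},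
      Function.Bijective Φ ∧
      (∀ L, (Φ L).1.1 = fun i j => (L.1 j).1 i) ∧
      (∀ L, (Φ L).1.2 = fun i j =>
        if (L.1 j).1 i ≠ 0 then (L.1 j).2 i + 1 else 0) ∧
      (∀ L (c : ℤ), countPlane L.1 c = countTabPair (Φ L).1.1 (Φ L).1.2 c) :=
  planeSPartitions_equiv_tableaux_pairs_general s hs0
end

section
/- A pair of partitions (λ, μ) (with λ an s⁻₊-partition, μ an s⁻₋-partition, ℓ(λ) ≥ ℓ(μ)) is 0-self-comparable, i.e. (λ, μ) ≥₀ (λ, μ), if and only if a_i = 0 whenever s_{i+1} = s₀ = −1 and b_i = 0 whenever s_i = s₀ = −1, where a_i is the number of (nonzero) rows of λ ending in a box of color i and b_i the number of columns of μ (appended with zero parts to length ℓ(λ)) ending in a box of color i. -/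
/-! Both sides say the same thing box by box. Comparing `(λ, μ)` with itself forces equality in
every part, so `≥₀` reduces to `ℓ(λ) ≤ ℓ(μ)` together with `s = 1` at the colors `λ_j` and `−μ_j`
of the nonzero parts. Since `s` has period `N = m + n`, a row of `λ` ends in a box of color `i`
with `s_{i+1} = −1` exactly when `s_{λ_j} = −1`, and likewise for the columns of `μ`. A zero part
`μ_j = 0` below a nonzero `λ_j` has color `0`, where `s₀ = −1`: this is how the length condition
is encoded in the vanishing of the `b_i`. -/

theorem Function.Periodic.eq_of_dvd_sub {β : Type*} {s : ℤ → β} {N : ℤ}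
    (h : Function.Periodic s N) {x y : ℤ} (hxy : N ∣ x - y) : s x = s y := by
  obtain ⟨k, hk⟩ := hxy
  rw [show y = x - k * N by linarith]
  exact (h.sub_int_mul_eq k).symm

theorem geRelZero_self_iff (s : ℤ → ℤ) (p : (ℕ → ℕ) × (ℕ → ℕ)) :
    GeRelZero s p p ↔
      (∀ i, p.1 i ≠ 0 → p.2 i ≠ 0) ∧ (∀ i, p.1 i ≠ 0 → s (p.1 i) = -s 0) ∧
        ∀ i, p.2 i ≠ 0 → s (-(p.2 i : ℤ)) = -s 0 := by
  simp only [GeRelZero, le_refl, true_and, imp_self, implies_true, forall_const]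
  refine and_congr_right fun _ => and_congr ?_ ?_ <;>
    exact forall_congr' fun i => by tauto

theorem IsPartFun.ncard_setOf_ne_zero_and_eq_zero_iff {f : ℕ → ℕ} (hf : IsPartFun f)
    (P : ℕ → Prop) : {j | f j ≠ 0 ∧ P j}.ncard = 0 ↔ ∀ j, f j ≠ 0 → ¬ P j := by
  obtain ⟨L, hL⟩ := hf.2
  have hfin : {j | f j ≠ 0 ∧ P j}.Finite :=
    (Set.finite_Iio L).subset fun j hj => by
      by_contra hjL
      exact hj.1 (hL j (not_lt.mp hjL))
  simp [Set.ncard_eq_zero hfin, Set.eq_empty_iff_forall_notMem]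

theorem IsPartFun.forall_ncard_dvd_sub_eq_zero_iff {f : ℕ → ℕ} (hf : IsPartFun f)
    {s : ℤ → ℤ} {N : ℤ} (hper : Function.Periodic s N) (c : ℕ → ℤ) (v : ℤ) :
    (∀ i, s i = v → {j | f j ≠ 0 ∧ N ∣ c j - i}.ncard = 0) ↔
      ∀ j, f j ≠ 0 → s (c j) ≠ v := by
  simp only [hf.ncard_setOf_ne_zero_and_eq_zero_iff]
  constructor
  · intro h j hj hsj
    exact h (c j) hsj j hj (by simp)
  · intro h i hsi j hj hdvd
    exact h j hj ((hper.eq_of_dvd_sub hdvd).trans hsi)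

theorem forall_apply_neg_ne_iff {lam mu : ℕ → ℕ} (hlen : ∀ i, mu i ≠ 0 → lam i ≠ 0)
    {s : ℤ → ℤ} {v : ℤ} (hs0 : s 0 = v) :
    (∀ j, lam j ≠ 0 → s (-(mu j : ℤ)) ≠ v) ↔
      (∀ j, lam j ≠ 0 → mu j ≠ 0) ∧ ∀ j, mu j ≠ 0 → s (-(mu j : ℤ)) ≠ v := by
  refine ⟨fun h => ⟨fun j hj hmu => h j hj (by simp [hmu, hs0]), fun j hmu => h j (hlen j hmu)⟩,
    fun ⟨hlam, hmu⟩ j hj => hmu j (hlam j hj)⟩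

theorem zero_self_comparable_iff_general
    (m n : ℕ)
    (s : ℤ → ℤ) (hs : ∀ i, s i = 1 ∨ s i = -1)
    (hper : ∀ i : ℤ, s (i + (m + n)) = s i)
    (hs0 : s 0 = -1)
    (lam mu : ℕ → ℕ) (hlam : IsPartFun lam)
    (hlen : ∀ i, mu i ≠ 0 → lam i ≠ 0) :
    GeRelZero s (lam, mu) (lam, mu) ↔
      ((∀ i : ℤ, s (i + 1) = -1 →
          {j : ℕ | lam j ≠ 0 ∧ ((m + n : ℤ)) ∣ ((lam j : ℤ) - (i + 1))}.ncard = 0) ∧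
        (∀ i : ℤ, s i = -1 →
          {j : ℕ | lam j ≠ 0 ∧ ((m + n : ℤ)) ∣ (-(mu j : ℤ) - i)}.ncard = 0)) := by
  have hperiodic : Function.Periodic s (m + n : ℤ) := hper
  have hsign : ∀ x, s x = -s 0 ↔ s x ≠ -1 := fun x => by
    rcases hs x with h | h <;> simp [h, hs0]
  have hshift : (∀ i : ℤ, s (i + 1) = -1 →
      {j : ℕ | lam j ≠ 0 ∧ ((m + n : ℤ)) ∣ ((lam j : ℤ) - (i + 1))}.ncard = 0) ↔
      ∀ i : ℤ, s i = -1 → {j : ℕ | lam j ≠ 0 ∧ ((m + n : ℤ)) ∣ ((lam j : ℤ) - i)}.ncard = 0 :=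
    ⟨fun h i => by simpa using h (i - 1), fun h i => h (i + 1)⟩
  rw [geRelZero_self_iff, hshift, hlam.forall_ncard_dvd_sub_eq_zero_iff hperiodic,
    hlam.forall_ncard_dvd_sub_eq_zero_iff hperiodic, forall_apply_neg_ne_iff hlen hs0]
  simp only [hsign]
  tauto

/-- For `s₀ = −1`, a pair `(λ, μ)` with `ℓ(λ) ≥ ℓ(μ)` is `0`-self-comparable
iff `a_i = 0` whenever `s_{i+1} = −1` and `b_i = 0` whenever `s_i = −1`, where
`a_i = #{j ≤ ℓ(λ) : λ_j ≡ i+1 (mod N)}` counts rows of `λ` ending in a box of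
color `i` and `b_i = #{j ≤ ℓ(λ) : −μ_j ≡ i (mod N)}` counts columns of `μ`
(zero-extended to length `ℓ(λ)`) ending in a box of color `i`. -/
theorem zero_self_comparable_iff
    (m n : ℕ) (hmn : m ≠ n) (hN : 3 ≤ m + n)
    (s : ℤ → ℤ) (hs : ∀ i, s i = 1 ∨ s i = -1)
    (hper : ∀ i : ℤ, s (i + (m + n)) = s i)
    (hs0 : s 0 = -1)
    (lam mu : ℕ → ℕ) (hlam : IsPartFun lam) (hmu : IsPartFun mu)
    (hlen : ∀ i, mu i ≠ 0 → lam i ≠ 0) :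
    GeRelZero s (lam, mu) (lam, mu) ↔
      ((∀ i : ℤ, s (i + 1) = -1 →
          {j : ℕ | lam j ≠ 0 ∧ ((m + n : ℤ)) ∣ ((lam j : ℤ) - (i + 1))}.ncard = 0) ∧
        (∀ i : ℤ, s i = -1 →
          {j : ℕ | lam j ≠ 0 ∧ ((m + n : ℤ)) ∣ (-(mu j : ℤ) - i)}.ncard = 0)) :=
  zero_self_comparable_iff_general m n s hs hper hs0 lam mu hlam hlen
end

section
/- The relation ≥ⱼ on pairs of partitions is conditionally transitive: if (λ⁽¹⁾,μ⁽¹⁾) ≥ⱼ (λ⁽²⁾,μ⁽²⁾) and (λ⁽²⁾,μ⁽²⁾) ≥ⱼ (λ⁽³⁾,μ⁽³⁾), and additionally ℓ(μ⁽²⁾) ≤ ℓ(λ⁽²⁾), then (λ⁽¹⁾,μ⁽¹⁾) ≥ⱼ (λ⁽³⁾,μ⁽³⁾). -/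
/-- The relation `(λ⁽¹⁾,μ⁽¹⁾) ≥ⱼ (λ⁽²⁾,μ⁽²⁾)` for pairs of partitions:
`ℓ(λ⁽²⁾) ≤ ℓ(μ⁽¹⁾)`, `ℓ(λ⁽²⁾) ≤ ℓ(λ⁽¹⁾)`, `ℓ(μ⁽²⁾) ≤ ℓ(μ⁽¹⁾)`, and entrywise
`λ⁽¹⁾_i ≥ λ⁽²⁾_i` with equality allowed only if `s (λ⁽¹⁾_i + j) = -s j` or
`λ⁽¹⁾_i = 0`, and similarly for `μ` with `s (−μ⁽¹⁾_i + j) = -s j`. -/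
def GeRel (s : ℤ → ℤ) (j : ℤ) (p q : (ℕ → ℕ) × (ℕ → ℕ)) : Prop :=
  (∀ i, q.1 i ≠ 0 → p.2 i ≠ 0) ∧
  (∀ i, q.1 i ≠ 0 → p.1 i ≠ 0) ∧
  (∀ i, q.2 i ≠ 0 → p.2 i ≠ 0) ∧
  (∀ i, q.1 i ≤ p.1 i ∧
    (q.1 i = p.1 i → s ((p.1 i : ℤ) + j) = -s j ∨ p.1 i = 0)) ∧
  (∀ i, q.2 i ≤ p.2 i ∧
    (q.2 i = p.2 i → s (-(p.2 i : ℤ) + j) = -s j ∨ p.2 i = 0))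

theorem le_and_imp_of_eq_of_le {P : Prop} {a b c : ℕ}
    (hab : b ≤ a ∧ (b = a → P)) (hcb : c ≤ b) : c ≤ a ∧ (c = a → P) :=
  ⟨hcb.trans hab.1, fun hca => hab.2 (le_antisymm hab.1 (hca ▸ hcb))⟩

theorem geRel_conditionally_transitive_general
    (s : ℤ → ℤ) (j : ℤ)
    (P₁ P₂ P₃ : (ℕ → ℕ) × (ℕ → ℕ))
    (h12 : GeRel s j P₁ P₂) (h23 : GeRel s j P₂ P₃) :
    GeRel s j P₁ P₃ := by
  obtain ⟨hlm₁₂, hl₁₂, hm₁₂, hle₁₂, hme₁₂⟩ := h12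
  obtain ⟨hlm₂₃, hl₂₃, hm₂₃, hle₂₃, hme₂₃⟩ := h23
  exact ⟨fun i h => hm₁₂ i (hlm₂₃ i h), fun i h => hl₁₂ i (hl₂₃ i h),
    fun i h => hm₁₂ i (hm₂₃ i h), fun i => le_and_imp_of_eq_of_le (hle₁₂ i) (hle₂₃ i).1,
    fun i => le_and_imp_of_eq_of_le (hme₁₂ i) (hme₂₃ i).1⟩

/-- Conditional transitivity of `≥ⱼ`: if `(λ⁽¹⁾,μ⁽¹⁾) ≥ⱼ (λ⁽²⁾,μ⁽²⁾)`,
`(λ⁽²⁾,μ⁽²⁾) ≥ⱼ (λ⁽³⁾,μ⁽³⁾)` and `ℓ(μ⁽²⁾) ≤ ℓ(λ⁽²⁾)`, then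
`(λ⁽¹⁾,μ⁽¹⁾) ≥ⱼ (λ⁽³⁾,μ⁽³⁾)`. -/
theorem geRel_conditionally_transitive
    (s : ℤ → ℤ) (hs : ∀ i, s i = 1 ∨ s i = -1) (j : ℤ)
    (P₁ P₂ P₃ : (ℕ → ℕ) × (ℕ → ℕ))
    (h₁ : IsPartFun P₁.1 ∧ IsPartFun P₁.2)
    (h₂ : IsPartFun P₂.1 ∧ IsPartFun P₂.2)
    (h₃ : IsPartFun P₃.1 ∧ IsPartFun P₃.2)
    (h12 : GeRel s j P₁ P₂) (h23 : GeRel s j P₂ P₃)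
    (hlen : ∀ i, P₂.2 i ≠ 0 → P₂.1 i ≠ 0) :
    GeRel s j P₁ P₃ :=
  geRel_conditionally_transitive_general s j P₁ P₂ P₃ h12 h23
end
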